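/- Let f : P¹ → P¹ be a rational map of degree d > 1, k ≥ 1 an integer, λ ∈ ℂ nonzero, and q a nonzero meromorphic k-differential on P¹ with f*q = λ·q. Then f is postcritically finite: the postcritical set P_f = ⋃_{n≥1} f^n(Ram_f), where Ram_f is the set of ramification points of f, is a finite set. -/

import Mathlib

open Polynomial OnePoint

noncomputable section

/-- The Riemann sphere `P¹ = ℂ ∪ {∞}`. -/
abbrev P1 := OnePoint ℂ

namespace ParallelTensor

/-- Order of vanishing (negative at poles) of a nonzero rational function at a finite point. -/
def ordC (g : RatFunc ℂ) (x : ℂ) : ℤ :=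
  (g.num.rootMultiplicity x : ℤ) - (g.denom.rootMultiplicity x : ℤ)

/-- Composition `g ∘ f` of rational functions. -/
def comp (g f : RatFunc ℂ) : RatFunc ℂ :=
  Polynomial.aeval f g.num / Polynomial.aeval f g.denom

/-- Derivative of a rational function. -/
def deriv (f : RatFunc ℂ) : RatFunc ℂ :=
  algebraMap (Polynomial ℂ) (RatFunc ℂ)
      (Polynomial.derivative f.num * f.denom - f.num * Polynomial.derivative f.denom) /
    algebraMap (Polynomial ℂ) (RatFunc ℂ) (f.denom ^ 2)

/-- The (global) degree of a rational map. -/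
def degRat (f : RatFunc ℂ) : ℕ := max f.num.natDegree f.denom.natDegree

/-- Evaluation of a rational map as a self-map of the Riemann sphere. -/
def evalP1 (f : RatFunc ℂ) : P1 → P1 := fun x =>
  Option.elim x
    (if 0 < f.intDegree then (∞ : P1)
     else if f.intDegree < 0 then ((0 : ℂ) : P1)
     else ((f.num.leadingCoeff / f.denom.leadingCoeff : ℂ) : P1))
    (fun z => if f.denom.eval z = 0 then (∞ : P1)
              else ((f.num.eval z / f.denom.eval z : ℂ) : P1))

/-- Local degree of `f` at a finite point: the pole order at a pole, and the order of
vanishing of `f - f(z)` otherwise. -/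
def locDegC (f : RatFunc ℂ) (z : ℂ) : ℕ :=
  if f.denom.eval z = 0 then f.denom.rootMultiplicity z
  else (ordC (f - RatFunc.C (f.num.eval z / f.denom.eval z)) z).toNat

/-- Local degree (valency) of `f` at a point of the sphere; at `∞` it is computed in the
coordinate `w = 1/z`. -/
def locDeg (f : RatFunc ℂ) : P1 → ℕ := fun x =>
  Option.elim x (locDegC (comp f (RatFunc.X)⁻¹) 0) (locDegC f)

/-- Order of the meromorphic `k`-differential `q = g·dz^k` at a point of the sphere:
`ord_x(g)` at a finite point `x`, and at `∞` the order at `0` of `g(1/w)·(-w⁻²)^k`. -/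
def ordDiff (k : ℕ) (g : RatFunc ℂ) : P1 → ℤ := fun x =>
  Option.elim x (-g.intDegree - 2 * k) (ordC g)

/-- Pullback of the `k`-differential `q = g·dz^k` under `f`, namely `g(f(z))·f'(z)^k·dz^k`. -/
def pullback (k : ℕ) (f g : RatFunc ℂ) : RatFunc ℂ := comp g f * deriv f ^ k

/-- Ramification locus of `f`: the points of local degree at least 2. -/
def Ram (f : RatFunc ℂ) : Set P1 := {x | 2 ≤ locDeg f x}

/-- The postcritical set `⋃_{n ≥ 1} fⁿ(Ram_f)`. -/
def PostCrit (f : RatFunc ℂ) : Set P1 :=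
  ⋃ (n : ℕ) (_ : 1 ≤ n), (evalP1 f)^[n] '' Ram f

end ParallelTensor

/-!
Write `q = g dz^k` and `ν(x) = ord_x(q) + k`. The local formula
`ord_x(f*q) = deg_x(f) · ord_{f(x)}(q) + k (deg_x(f) - 1)` turns `f*q = λ q` into
`ν(x) = deg_x(f) · ν(f(x))`, while `ν = k` outside the finite support of `q`. Hence `ν` does not
increase along an orbit once it is nonnegative, so the set `{ν < k}` is finite and forward
invariant. For a critical point `c`, either `ν(f(c)) < k`, or `ν(c) ≥ 2 ν(f(c)) > k`; then the
backward orbit of `c` lies in the finite set `{ν ≥ ν(c)}`, and a finite backward invariant set of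
the surjective map `f` is forward invariant, so it contains the forward orbit of `c`.

A rational function is nonconstant iff it is transcendental over `ℂ`, which makes precomposition
with it a field endomorphism of `ℂ(z)`. The point `∞` is handled in the chart `w = 1/z`, i.e. by
pulling back along `z ↦ z⁻¹`.
-/

theorem Set.Finite.mapsTo_of_preimage_subset {α : Type*} {F : α → α} {s : Set α} (hs : s.Finite)
    (hF : Function.Surjective F) (hpre : F ⁻¹' s ⊆ s) : Set.MapsTo F s s := by
  set σ := Function.surjInv hF
  have hσ : Set.MapsTo σ s s := fun y hy => hpre (by simpa [σ, Function.surjInv_eq hF] using hy)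
  have hbij := (hs.injOn_iff_bijOn_of_mapsTo hσ).1 (Function.injective_surjInv hF).injOn
  intro x hx
  obtain ⟨y, hy, rfl⟩ := hbij.surjOn hx
  rwa [Function.surjInv_eq hF]

namespace ParallelTensor

section Dynamics

variable {α : Type*} {F : α → α} {ν : α → ℤ} {m : α → ℕ} {k : ℤ}

theorem le_of_eq_mul_of_nonneg (hν : ∀ x, ν x = m x * ν (F x)) (hm : ∀ x, 1 ≤ m x) {x : α}
    (hx : 0 ≤ ν (F x)) : ν (F x) ≤ ν x := by
  rw [hν x]
  exact le_mul_of_one_le_left hx (by exact_mod_cast hm x)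

theorem finite_range_iterate_of_lt (hν : ∀ x, ν x = m x * ν (F x)) (hm : ∀ x, 1 ≤ m x)
    (hS : {x | ν x ≠ k}.Finite) (hk : 0 ≤ k) {y : α} (hy : ν y < k) :
    (Set.range fun n => F^[n] y).Finite := by
  have hmaps : Set.MapsTo F {x | ν x < k} {x | ν x < k} := fun x (hx : ν x < k) =>
    lt_of_not_ge fun h => (h.trans (le_of_eq_mul_of_nonneg hν hm (hk.trans h))).not_gt hx
  refine (hS.subset fun x (hx : ν x < k) => hx.ne).subset ?_
  rintro _ ⟨n, rfl⟩
  exact hmaps.iterate n hy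

theorem finite_range_iterate_of_gt (hF : Function.Surjective F) (hν : ∀ x, ν x = m x * ν (F x))
    (hm : ∀ x, 1 ≤ m x) (hS : {x | ν x ≠ k}.Finite) (hk : 0 ≤ k) {c : α} (hc : k < ν c) :
    (Set.range fun n => F^[n] c).Finite := by
  set B := {x | ∃ n, F^[n] x = c}
  have hle : ∀ n x, F^[n] x = c → ν c ≤ ν x := by
    intro n
    induction n with
    | zero => rintro x rfl; rfl
    | succ n ih =>
      intro x hx
      have h := ih (F x) hx
      exact h.trans (le_of_eq_mul_of_nonneg hν hm (by omega))
  have hB : B.Finite := hS.subset fun x ⟨n, hn⟩ => (hc.trans_le (hle n x hn)).ne'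
  have hmaps := hB.mapsTo_of_preimage_subset hF fun x ⟨n, hn⟩ => ⟨n + 1, hn⟩
  refine hB.subset ?_
  rintro _ ⟨n, rfl⟩
  exact hmaps.iterate n ⟨0, rfl⟩

theorem finite_range_iterate_apply_of_two_le (hF : Function.Surjective F)
    (hν : ∀ x, ν x = m x * ν (F x)) (hm : ∀ x, 1 ≤ m x) (hS : {x | ν x ≠ k}.Finite) (hk : 0 < k)
    {c : α} (hc : 2 ≤ m c) :
    (Set.range fun n => F^[n] (F c)).Finite := by
  rcases lt_or_ge (ν (F c)) k with hlt | hge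
  · exact finite_range_iterate_of_lt hν hm hS hk.le hlt
  · have hgt : k < ν c := by
      have : (2 : ℤ) ≤ m c := by exact_mod_cast hc
      rw [hν c]
      nlinarith
    refine (finite_range_iterate_of_gt hF hν hm hS hk.le hgt).subset ?_
    rintro _ ⟨n, rfl⟩
    exact ⟨n + 1, (Function.iterate_succ_apply F n c).symm⟩

theorem finite_iUnion_iterate_image {R : Set α} (hR : R.Finite)
    (horb : ∀ c ∈ R, (Set.range fun n => F^[n] (F c)).Finite) :
    (⋃ (n : ℕ) (_ : 1 ≤ n), F^[n] '' R).Finite := by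
  refine (hR.biUnion horb).subset ?_
  simp only [Set.iUnion_subset_iff]
  rintro n hn _ ⟨c, hc, rfl⟩
  refine Set.mem_biUnion hc ⟨n - 1, ?_⟩
  show F^[n - 1] (F c) = F^[n] c
  rw [← Function.iterate_succ_apply, Nat.succ_eq_add_one, Nat.sub_add_cancel hn]

end Dynamics

local notation "ι" => algebraMap ℂ[X] (RatFunc ℂ)

section Order

theorem ordC_algebraMap_div {p q : ℂ[X]} (hp : p ≠ 0) (hq : q ≠ 0) (x : ℂ) :
    ordC (ι p / ι q) x = p.rootMultiplicity x - q.rootMultiplicity x := by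
  set g := ι p / ι q
  have hg : g ≠ 0 := div_ne_zero (RatFunc.algebraMap_ne_zero hp) (RatFunc.algebraMap_ne_zero hq)
  have key := congrArg (rootMultiplicity x) ((RatFunc.num_mul_eq_mul_denom_iff hq).2 rfl :
    g.num * q = p * g.denom)
  rw [rootMultiplicity_mul (mul_ne_zero (RatFunc.num_ne_zero hg) hq),
    rootMultiplicity_mul (mul_ne_zero hp g.denom_ne_zero)] at key
  unfold ordC
  omega

theorem ordC_C (c : ℂ) (x : ℂ) : ordC (RatFunc.C c) x = 0 := by
  simp [ordC, rootMultiplicity_C]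

theorem ordC_mul {a b : RatFunc ℂ} (ha : a ≠ 0) (hb : b ≠ 0) (x : ℂ) :
    ordC (a * b) x = ordC a x + ordC b x := by
  have hab : a * b = ι (a.num * b.num) / ι (a.denom * b.denom) := by
    rw [map_mul, map_mul, ← div_mul_div_comm, RatFunc.num_div_denom, RatFunc.num_div_denom]
  have hn := mul_ne_zero (RatFunc.num_ne_zero ha) (RatFunc.num_ne_zero hb)
  have hd := mul_ne_zero a.denom_ne_zero b.denom_ne_zero
  rw [hab, ordC_algebraMap_div hn hd, rootMultiplicity_mul hn, rootMultiplicity_mul hd]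
  unfold ordC
  push_cast
  ring

theorem ordC_pow {a : RatFunc ℂ} (ha : a ≠ 0) (n : ℕ) (x : ℂ) :
    ordC (a ^ n) x = n * ordC a x := by
  induction n with
  | zero => simpa using ordC_C 1 x
  | succ n ih => rw [pow_succ, ordC_mul (pow_ne_zero _ ha) ha, ih]; push_cast; ring

theorem ordC_div {a b : RatFunc ℂ} (ha : a ≠ 0) (hb : b ≠ 0) (x : ℂ) :
    ordC (a / b) x = ordC a x - ordC b x := by
  have := ordC_mul (div_ne_zero ha hb) hb x
  rw [div_mul_cancel₀ a hb] at this
  omega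

theorem ordC_multiset_prod {s : Multiset (RatFunc ℂ)} (hs : ∀ a ∈ s, a ≠ 0) (x : ℂ) :
    ordC s.prod x = (s.map (ordC · x)).sum := by
  induction s using Multiset.induction_on with
  | empty => simpa using ordC_C 1 x
  | cons a s ih =>
    rw [Multiset.prod_cons, Multiset.map_cons, Multiset.sum_cons,
      ordC_mul (hs a (Multiset.mem_cons_self a s))
        (Multiset.prod_ne_zero fun h => hs 0 (Multiset.mem_cons_of_mem h) rfl),
      ih fun b hb => hs b (Multiset.mem_cons_of_mem hb)]

theorem denom_eval_ne_zero_of_num_eval_eq_zero (g : RatFunc ℂ) {x : ℂ}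
    (h : g.num.eval x = 0) : g.denom.eval x ≠ 0 := by
  obtain ⟨a, b, hab⟩ := g.isCoprime_num_denom
  intro h'
  simpa [h, h'] using congrArg (eval x) hab

theorem ordC_neg_iff (g : RatFunc ℂ) (x : ℂ) :
    ordC g x < 0 ↔ g.denom.eval x = 0 := by
  rw [← IsRoot.def, ← rootMultiplicity_pos g.denom_ne_zero]
  constructor
  · unfold ordC; omega
  · intro h
    have hnum : ¬ g.num.IsRoot x := fun hn =>
      denom_eval_ne_zero_of_num_eval_eq_zero g hn ((rootMultiplicity_pos g.denom_ne_zero).1 h)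
    unfold ordC
    rw [rootMultiplicity_eq_zero hnum]
    omega

theorem num_eval_eq_zero_of_ordC_pos {g : RatFunc ℂ} {x : ℂ} (h : 0 < ordC g x) :
    g.num.eval x = 0 := by
  by_contra hx
  unfold ordC at h
  rw [rootMultiplicity_eq_zero hx] at h
  omega

theorem finite_setOf_ordC_ne_zero {g : RatFunc ℂ} (hg : g ≠ 0) :
    {x | ordC g x ≠ 0}.Finite := by
  refine (finite_setOfPred_isRoot (mul_ne_zero (RatFunc.num_ne_zero hg) g.denom_ne_zero)).subset ?_
  intro x hx
  by_contra hroot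
  simp only [Set.mem_ofPred_eq, IsRoot.def, eval_mul, mul_eq_zero, not_or] at hx hroot
  apply hx
  unfold ordC
  rw [rootMultiplicity_eq_zero hroot.1, rootMultiplicity_eq_zero hroot.2]
  rfl

end Order

section Composition

variable {u : RatFunc ℂ}

theorem ne_C_of_transcendental (hu : Transcendental ℂ u) (c : ℂ) : u ≠ RatFunc.C c := by
  rintro rfl
  exact hu (isAlgebraic_algebraMap c)

theorem ne_zero_of_transcendental (hu : Transcendental ℂ u) : u ≠ 0 := by
  simpa using ne_C_of_transcendental hu 0

theorem transcendental_of_one_le_degRat {f : RatFunc ℂ} (hf : 1 ≤ degRat f) :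
    Transcendental ℂ f := by
  refine f.transcendental_of_ne_C ?_
  rintro ⟨c, rfl⟩
  simp [degRat] at hf

theorem transcendental_X_inv : Transcendental ℂ (RatFunc.X⁻¹ : RatFunc ℂ) :=
  fun h => RatFunc.transcendental_X ((IsAlgebraic.inv_iff (R := ℂ) (K := RatFunc ℂ)).1 h)

def compAlgHom (u : RatFunc ℂ) (hu : Transcendental ℂ u) : RatFunc ℂ →ₐ[ℂ] RatFunc ℂ :=
  RatFunc.liftAlgHom (aeval u)
    (nonZeroDivisors_le_comap_nonZeroDivisors_of_injective _ (transcendental_iff_injective.1 hu))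

theorem aeval_ne_zero (hu : Transcendental ℂ u) {p : ℂ[X]} (hp : p ≠ 0) : aeval u p ≠ 0 :=
  (map_ne_zero_iff _ (transcendental_iff_injective.1 hu)).2 hp

theorem comp_eq_compAlgHom (hu : Transcendental ℂ u) (g : RatFunc ℂ) :
    comp g u = compAlgHom u hu g :=
  (RatFunc.liftAlgHom_apply _ _ g).symm

theorem comp_algebraMap_div (hu : Transcendental ℂ u) (p q : ℂ[X]) :
    comp (ι p / ι q) u = aeval u p / aeval u q := by
  rw [comp_eq_compAlgHom hu]
  exact RatFunc.liftAlgHom_apply_div _ _ p q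

theorem comp_ne_zero (hu : Transcendental ℂ u) {g : RatFunc ℂ} (hg : g ≠ 0) : comp g u ≠ 0 := by
  rw [comp_eq_compAlgHom hu]
  exact (map_ne_zero_iff _ (compAlgHom u hu).toRingHom.injective).2 hg

theorem transcendental_comp {g : RatFunc ℂ} (hg : Transcendental ℂ g) (hu : Transcendental ℂ u) :
    Transcendental ℂ (comp g u) := by
  rw [comp_eq_compAlgHom hu]
  exact fun h => hg ((isAlgebraic_algHom_iff _ (compAlgHom u hu).toRingHom.injective).1 h)

theorem comp_comp {f : RatFunc ℂ} (hu : Transcendental ℂ u) (g : RatFunc ℂ) :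
    comp (comp g f) u = comp g (comp f u) := by
  rw [comp_eq_compAlgHom hu, comp, comp, map_div₀, ← aeval_algHom_apply, ← aeval_algHom_apply,
    ← comp_eq_compAlgHom hu]

end Composition

section Derivative

theorem deriv_algebraMap_div {p q : ℂ[X]} (hq : q ≠ 0) :
    deriv (ι p / ι q) = ι (derivative p * q - p * derivative q) / ι (q ^ 2) := by
  set g := ι p / ι q
  have hkey : g.num * q = p * g.denom := (RatFunc.num_mul_eq_mul_denom_iff hq).2 rfl
  have hkey' := congrArg derivative hkey
  rw [derivative_mul, derivative_mul] at hkey'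
  rw [deriv, div_eq_div_iff (RatFunc.algebraMap_ne_zero (pow_ne_zero 2 g.denom_ne_zero))
    (RatFunc.algebraMap_ne_zero (pow_ne_zero 2 hq)), ← map_mul, ← map_mul]
  refine congrArg (algebraMap ℂ[X] (RatFunc ℂ)) ?_
  linear_combination (q * g.denom) * hkey' -
    (derivative q * g.denom + derivative g.denom * q) * hkey

theorem deriv_add (a b : RatFunc ℂ) : deriv (a + b) = deriv a + deriv b := by
  have h1 := RatFunc.algebraMap_ne_zero a.denom_ne_zero
  have h2 := RatFunc.algebraMap_ne_zero b.denom_ne_zero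
  have hab : a + b = ι (a.num * b.denom + b.num * a.denom) / ι (a.denom * b.denom) := by
    conv_lhs => rw [← RatFunc.num_div_denom a, ← RatFunc.num_div_denom b]
    rw [div_add_div _ _ h1 h2]
    simp only [map_mul, map_add]
    ring
  rw [hab, deriv_algebraMap_div (mul_ne_zero a.denom_ne_zero b.denom_ne_zero), deriv, deriv]
  simp only [derivative_mul, map_mul, map_add, map_sub, map_pow]
  field_simp
  ring

theorem deriv_mul (a b : RatFunc ℂ) : deriv (a * b) = a * deriv b + b * deriv a := by
  have ha : a = ι a.num / ι a.denom := (RatFunc.num_div_denom a).symm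
  have hb : b = ι b.num / ι b.denom := (RatFunc.num_div_denom b).symm
  have h1 := RatFunc.algebraMap_ne_zero a.denom_ne_zero
  have h2 := RatFunc.algebraMap_ne_zero b.denom_ne_zero
  have hab : a * b = ι (a.num * b.num) / ι (a.denom * b.denom) := by
    rw [map_mul, map_mul, ← div_mul_div_comm, ← ha, ← hb]
  rw [hab, deriv_algebraMap_div (mul_ne_zero a.denom_ne_zero b.denom_ne_zero), deriv, deriv]
  generalize a.num = na at ha ⊢
  generalize a.denom = da at ha h1 ⊢
  generalize b.num = nb at hb ⊢
  generalize b.denom = db at hb h2 ⊢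
  subst ha hb
  simp only [derivative_mul, map_mul, map_sub, map_pow]
  field_simp
  simp only [map_add, map_mul]
  ring

theorem deriv_C (c : ℂ) : deriv (RatFunc.C c) = 0 := by
  simp [deriv, RatFunc.num_C, RatFunc.denom_C]

def derivation : Derivation ℂ (RatFunc ℂ) (RatFunc ℂ) :=
  Derivation.mk'
    { toFun := deriv
      map_add' := deriv_add
      map_smul' := fun c g => by
        rw [Algebra.smul_def, RatFunc.algebraMap_eq_C, deriv_mul, deriv_C, RingHom.id_apply,
          Algebra.smul_def, RatFunc.algebraMap_eq_C]
        ring }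
    deriv_mul

theorem derivation_apply (g : RatFunc ℂ) : derivation g = deriv g := rfl

theorem deriv_comp {u : RatFunc ℂ} (hu : Transcendental ℂ u) (g : RatFunc ℂ) :
    deriv (comp g u) = comp (deriv g) u * deriv u := by
  have hden := aeval_ne_zero hu g.denom_ne_zero
  rw [show deriv g = ι (derivative g.num * g.denom - g.num * derivative g.denom) / ι (g.denom ^ 2)
    from rfl, comp_algebraMap_div hu, show comp g u = aeval u g.num / aeval u g.denom from rfl,
    ← derivation_apply, Derivation.leibniz_div, Derivation.map_aeval, Derivation.map_aeval]
  simp only [map_sub, map_mul, map_pow, smul_eq_mul, derivation_apply]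
  field_simp

end Derivative

section DerivativeOrder

theorem X_sub_C_mul_derivative_X_sub_C_pow (x : ℂ) (n : ℕ) :
    (X - C x) * derivative ((X - C x) ^ n) = C (n : ℂ) * (X - C x) ^ n := by
  rw [derivative_X_sub_C_pow]
  cases n with
  | zero => simp
  | succ n => simp only [Nat.add_sub_cancel, pow_succ]; ring

theorem rootMultiplicity_derivative_mul_sub {p q : ℂ[X]} (hp : p ≠ 0) (hq : q ≠ 0) {x : ℂ}
    (hpq : p.rootMultiplicity x ≠ q.rootMultiplicity x) :
    derivative p * q - p * derivative q ≠ 0 ∧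
      (derivative p * q - p * derivative q).rootMultiplicity x + 1 =
        p.rootMultiplicity x + q.rootMultiplicity x := by
  set a := p.rootMultiplicity x
  set b := q.rootMultiplicity x
  obtain ⟨w₁, hp₁, hw₁⟩ := p.exists_eq_pow_rootMultiplicity_mul_and_not_dvd hp x
  obtain ⟨w₂, hq₂, hw₂⟩ := q.exists_eq_pow_rootMultiplicity_mul_and_not_dvd hq x
  set G := (C (a : ℂ) - C (b : ℂ)) * w₁ * w₂ +
    (X - C x) * (derivative w₁ * w₂ - w₁ * derivative w₂)
  have hG : G.eval x ≠ 0 := by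
    have hab : (a : ℂ) - b ≠ 0 := sub_ne_zero.2 (Nat.cast_injective.ne hpq)
    simpa [G, dvd_iff_isRoot, hab] using And.intro hw₁ hw₂
  have hfactor : (X - C x) * (derivative p * q - p * derivative q) = (X - C x) ^ (a + b) * G := by
    rw [hp₁, hq₂]
    simp only [derivative_mul]
    linear_combination (w₁ * w₂ * (X - C x) ^ b) * X_sub_C_mul_derivative_X_sub_C_pow x a -
      ((X - C x) ^ a * w₁ * w₂) * X_sub_C_mul_derivative_X_sub_C_pow x b
  have hG0 : G ≠ 0 := fun h => hG (by simp [h])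
  have hrhs : (X - C x) ^ (a + b) * G ≠ 0 := mul_ne_zero (pow_ne_zero _ (X_sub_C_ne_zero x)) hG0
  have hD : derivative p * q - p * derivative q ≠ 0 := fun h =>
    hrhs (by rw [← hfactor, h, mul_zero])
  refine ⟨hD, ?_⟩
  have := congrArg (rootMultiplicity x) hfactor
  rw [rootMultiplicity_mul (mul_ne_zero (X_sub_C_ne_zero x) hD), rootMultiplicity_mul hrhs,
    rootMultiplicity_X_sub_C_self, rootMultiplicity_X_sub_C_pow,
    rootMultiplicity_eq_zero hG] at this
  omega

theorem ordC_deriv {h : RatFunc ℂ} (hh : h ≠ 0) {x : ℂ} (hx : ordC h x ≠ 0) :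
    deriv h ≠ 0 ∧ ordC (deriv h) x = ordC h x - 1 := by
  have hne : h.num.rootMultiplicity x ≠ h.denom.rootMultiplicity x := fun e =>
    hx (by simp [ordC, e])
  obtain ⟨hD, hrm⟩ :=
    rootMultiplicity_derivative_mul_sub (RatFunc.num_ne_zero hh) h.denom_ne_zero hne
  have hq2 := pow_ne_zero 2 h.denom_ne_zero
  refine ⟨div_ne_zero (RatFunc.algebraMap_ne_zero hD) (RatFunc.algebraMap_ne_zero hq2), ?_⟩
  rw [deriv, ordC_algebraMap_div hD hq2, pow_two,
    rootMultiplicity_mul (mul_ne_zero h.denom_ne_zero h.denom_ne_zero)]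
  unfold ordC
  omega

end DerivativeOrder

section LocalDegree

variable {u : RatFunc ℂ}

theorem sub_C_eq_div (u : RatFunc ℂ) (c : ℂ) :
    u - RatFunc.C c = ι (u.num - C c * u.denom) / ι u.denom := by
  rw [map_sub, sub_div, map_mul, RatFunc.algebraMap_C,
    mul_div_cancel_right₀ _ (RatFunc.algebraMap_ne_zero u.denom_ne_zero), RatFunc.num_div_denom]

theorem num_sub_C_mul_denom_ne_zero (hu : Transcendental ℂ u) (c : ℂ) :
    u.num - C c * u.denom ≠ 0 := by
  intro h
  apply ne_C_of_transcendental hu c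
  rw [← sub_eq_zero, sub_C_eq_div, h, map_zero, zero_div]

theorem ordC_sub_C (hu : Transcendental ℂ u) (c x : ℂ) :
    ordC (u - RatFunc.C c) x =
      (u.num - C c * u.denom).rootMultiplicity x - u.denom.rootMultiplicity x := by
  rw [sub_C_eq_div, ordC_algebraMap_div (num_sub_C_mul_denom_ne_zero hu c) u.denom_ne_zero]

theorem ordC_sub_C_of_pole (hu : Transcendental ℂ u) {x : ℂ} (hx : u.denom.eval x = 0) (c : ℂ) :
    ordC (u - RatFunc.C c) x = ordC u x := by
  have hnum : ¬ u.num.IsRoot x := fun h => denom_eval_ne_zero_of_num_eval_eq_zero u h hx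
  have hsub : ¬ (u.num - C c * u.denom).IsRoot x := by simpa [hx] using hnum
  rw [ordC_sub_C hu, ordC, rootMultiplicity_eq_zero hnum, rootMultiplicity_eq_zero hsub]

theorem ordC_sub_C_of_ne (hu : Transcendental ℂ u) {x : ℂ} (hx : u.denom.eval x ≠ 0) {c : ℂ}
    (hc : c ≠ u.num.eval x / u.denom.eval x) : ordC (u - RatFunc.C c) x = 0 := by
  have hsub : ¬ (u.num - C c * u.denom).IsRoot x := by
    intro h
    apply hc
    rw [IsRoot.def, eval_sub, eval_mul, eval_C, sub_eq_zero] at h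
    rw [h, mul_div_cancel_right₀ _ hx]
  rw [ordC_sub_C hu, rootMultiplicity_eq_zero hsub, rootMultiplicity_eq_zero hx]
  rfl

theorem ordC_sub_value_pos (hu : Transcendental ℂ u) {x : ℂ} (hx : u.denom.eval x ≠ 0) :
    0 < ordC (u - RatFunc.C (u.num.eval x / u.denom.eval x)) x := by
  have hroot : (u.num - C (u.num.eval x / u.denom.eval x) * u.denom).IsRoot x := by
    simp [div_mul_cancel₀ _ hx]
  have := (rootMultiplicity_pos (num_sub_C_mul_denom_ne_zero hu _)).2 hroot
  rw [ordC_sub_C hu, rootMultiplicity_eq_zero hx]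
  omega

theorem locDegC_eq_neg_ordC {x : ℂ} (hx : u.denom.eval x = 0) : (locDegC u x : ℤ) = -ordC u x := by
  have hnum : ¬ u.num.IsRoot x := fun h => denom_eval_ne_zero_of_num_eval_eq_zero u h hx
  rw [locDegC, if_pos hx, ordC, rootMultiplicity_eq_zero hnum]
  ring

theorem locDegC_eq_ordC_sub_value (hu : Transcendental ℂ u) {x : ℂ} (hx : u.denom.eval x ≠ 0) :
    (locDegC u x : ℤ) = ordC (u - RatFunc.C (u.num.eval x / u.denom.eval x)) x := by
  rw [locDegC, if_neg hx, Int.toNat_of_nonneg (ordC_sub_value_pos hu hx).le]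

theorem one_le_locDegC (hu : Transcendental ℂ u) (x : ℂ) : 1 ≤ locDegC u x := by
  by_cases hx : u.denom.eval x = 0
  · have := (ordC_neg_iff u x).2 hx
    have := locDegC_eq_neg_ordC hx
    omega
  · have := ordC_sub_value_pos hu hx
    have := locDegC_eq_ordC_sub_value hu hx
    omega

theorem deriv_sub_C (u : RatFunc ℂ) (c : ℂ) : deriv (u - RatFunc.C c) = deriv u := by
  rw [← derivation_apply, map_sub, ← RatFunc.algebraMap_eq_C, Derivation.map_algebraMap,
    sub_zero, derivation_apply]

theorem ordC_deriv_of_pole (hu : Transcendental ℂ u) {x : ℂ} (hx : u.denom.eval x = 0) :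
    ordC (deriv u) x = -(locDegC u x : ℤ) - 1 := by
  rw [locDegC_eq_neg_ordC hx, neg_neg]
  exact (ordC_deriv (ne_zero_of_transcendental hu) ((ordC_neg_iff u x).2 hx).ne).2

theorem ordC_deriv_of_not_pole (hu : Transcendental ℂ u) {x : ℂ} (hx : u.denom.eval x ≠ 0) :
    ordC (deriv u) x = (locDegC u x : ℤ) - 1 := by
  have hpos := ordC_sub_value_pos hu hx
  rw [locDegC_eq_ordC_sub_value hu hx, ← deriv_sub_C u (u.num.eval x / u.denom.eval x)]
  exact (ordC_deriv (sub_ne_zero.2 (ne_C_of_transcendental hu _)) hpos.ne').2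

theorem deriv_ne_zero (hu : Transcendental ℂ u) : deriv u ≠ 0 := by
  obtain ⟨x, hx⟩ := (finite_setOfPred_isRoot u.denom_ne_zero).exists_notMem
  rw [← deriv_sub_C u (u.num.eval x / u.denom.eval x)]
  exact (ordC_deriv (sub_ne_zero.2 (ne_C_of_transcendental hu _))
    (ordC_sub_value_pos hu hx).ne').1

end LocalDegree

section CompositionOrder

variable {u : RatFunc ℂ}

theorem ordC_aeval (hu : Transcendental ℂ u) {p : ℂ[X]} (hp : p ≠ 0) (x : ℂ) :
    ordC (aeval u p) x = (p.roots.map fun r => ordC (u - RatFunc.C r) x).sum := by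
  have hsplit :=
    C_leadingCoeff_mul_prod_multiset_X_sub_C (IsAlgClosed.card_roots_eq_natDegree (p := p))
  conv_lhs => rw [← hsplit]
  rw [map_mul, aeval_C, map_multiset_prod, Multiset.map_map]
  simp only [Function.comp_def, map_sub, aeval_X, aeval_C, RatFunc.algebraMap_eq_C]
  have hfactors : ∀ a ∈ p.roots.map fun r => u - RatFunc.C r, a ≠ 0 := by
    simp only [Multiset.mem_map]
    rintro _ ⟨r, -, rfl⟩
    exact sub_ne_zero.2 (ne_C_of_transcendental hu r)
  rw [ordC_mul (by simpa using hp) (Multiset.prod_ne_zero fun h => hfactors 0 h rfl),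
    ordC_C, zero_add, ordC_multiset_prod hfactors, Multiset.map_map]
  rfl

theorem ordC_aeval_of_pole (hu : Transcendental ℂ u) {x : ℂ} (hx : u.denom.eval x = 0)
    {p : ℂ[X]} (hp : p ≠ 0) : ordC (aeval u p) x = p.natDegree * ordC u x := by
  rw [ordC_aeval hu hp, Multiset.map_congr rfl fun r _ => ordC_sub_C_of_pole hu hx r,
    Multiset.map_const', Multiset.sum_replicate, IsAlgClosed.card_roots_eq_natDegree, nsmul_eq_mul]

theorem ordC_aeval_of_not_pole (hu : Transcendental ℂ u) {x : ℂ} (hx : u.denom.eval x ≠ 0)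
    {p : ℂ[X]} (hp : p ≠ 0) :
    ordC (aeval u p) x = p.rootMultiplicity (u.num.eval x / u.denom.eval x) *
      ordC (u - RatFunc.C (u.num.eval x / u.denom.eval x)) x := by
  classical
  rw [ordC_aeval hu hp, Multiset.sum_map_eq_nsmul_single (u.num.eval x / u.denom.eval x)
    fun r hr _ => ordC_sub_C_of_ne hu hx hr, count_roots, nsmul_eq_mul]

theorem ordC_comp_of_pole (hu : Transcendental ℂ u) {g : RatFunc ℂ} (hg : g ≠ 0) {x : ℂ}
    (hx : u.denom.eval x = 0) : ordC (comp g u) x = g.intDegree * ordC u x := by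
  rw [comp, ordC_div (aeval_ne_zero hu (RatFunc.num_ne_zero hg)) (aeval_ne_zero hu g.denom_ne_zero),
    ordC_aeval_of_pole hu hx (RatFunc.num_ne_zero hg), ordC_aeval_of_pole hu hx g.denom_ne_zero,
    RatFunc.intDegree]
  ring

theorem ordC_comp_of_not_pole (hu : Transcendental ℂ u) {g : RatFunc ℂ} (hg : g ≠ 0) {x : ℂ}
    (hx : u.denom.eval x ≠ 0) :
    ordC (comp g u) x = ordC (u - RatFunc.C (u.num.eval x / u.denom.eval x)) x *
      ordC g (u.num.eval x / u.denom.eval x) := by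
  rw [comp, ordC_div (aeval_ne_zero hu (RatFunc.num_ne_zero hg)) (aeval_ne_zero hu g.denom_ne_zero),
    ordC_aeval_of_not_pole hu hx (RatFunc.num_ne_zero hg),
    ordC_aeval_of_not_pole hu hx g.denom_ne_zero, ← sub_mul, mul_comm]
  rfl

end CompositionOrder

section Pullback

variable {u g : RatFunc ℂ}

theorem evalP1_coe (u : RatFunc ℂ) (x : ℂ) :
    evalP1 u x = if u.denom.eval x = 0 then ∞ else ((u.num.eval x / u.denom.eval x : ℂ) : P1) :=
  rfl

theorem evalP1_infty_def (f : RatFunc ℂ) :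
    evalP1 f ∞ = if 0 < f.intDegree then ∞ else if f.intDegree < 0 then ((0 : ℂ) : P1)
      else ((f.num.leadingCoeff / f.denom.leadingCoeff : ℂ) : P1) :=
  rfl

theorem ordDiff_infty (k : ℕ) (g : RatFunc ℂ) : ordDiff k g ∞ = -g.intDegree - 2 * k := rfl

theorem ordDiff_coe (k : ℕ) (g : RatFunc ℂ) (x : ℂ) : ordDiff k g x = ordC g x := rfl

theorem pullback_ne_zero (hu : Transcendental ℂ u) (hg : g ≠ 0) (k : ℕ) : pullback k u g ≠ 0 :=
  mul_ne_zero (comp_ne_zero hu hg) (pow_ne_zero _ (deriv_ne_zero hu))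

theorem pullback_pullback (hu : Transcendental ℂ u) (f g : RatFunc ℂ) (k : ℕ) :
    pullback k u (pullback k f g) = pullback k (comp f u) g := by
  rw [pullback, pullback, pullback, comp_eq_compAlgHom hu, map_mul, map_pow,
    ← comp_eq_compAlgHom hu, ← comp_eq_compAlgHom hu, comp_comp hu, deriv_comp hu, mul_pow]
  ring

theorem ordC_pullback (hu : Transcendental ℂ u) (hg : g ≠ 0) (k : ℕ) (x : ℂ) :
    ordC (pullback k u g) x =
      locDegC u x * ordDiff k g (evalP1 u x) + k * ((locDegC u x : ℤ) - 1) := by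
  rw [pullback, ordC_mul (comp_ne_zero hu hg) (pow_ne_zero _ (deriv_ne_zero hu)),
    ordC_pow (deriv_ne_zero hu), evalP1_coe]
  by_cases hx : u.denom.eval x = 0
  · rw [if_pos hx, ordDiff_infty, ordC_comp_of_pole hu hg hx, ordC_deriv_of_pole hu hx,
      ← neg_neg (ordC u x), ← locDegC_eq_neg_ordC hx]
    ring
  · rw [if_neg hx, ordDiff_coe, ordC_comp_of_not_pole hu hg hx, ordC_deriv_of_not_pole hu hx,
      ← locDegC_eq_ordC_sub_value hu hx]

end Pullback

section Infinity

theorem X_inv_eq_div : (RatFunc.X⁻¹ : RatFunc ℂ) = ι 1 / ι X := by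
  rw [map_one, RatFunc.algebraMap_X, one_div]

theorem ordC_X_inv : ordC (RatFunc.X⁻¹ : RatFunc ℂ) 0 = -1 := by
  rw [X_inv_eq_div, ordC_algebraMap_div one_ne_zero X_ne_zero]
  have h := rootMultiplicity_X_sub_C_self (x := (0 : ℂ))
  simp only [map_zero, sub_zero] at h
  simp [h]

theorem X_inv_denom_eval_zero : (RatFunc.X⁻¹ : RatFunc ℂ).denom.eval 0 = 0 :=
  (ordC_neg_iff _ 0).1 (by rw [ordC_X_inv]; norm_num)

theorem ordC_comp_X_inv {h : RatFunc ℂ} (hh : h ≠ 0) :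
    ordC (comp h RatFunc.X⁻¹) 0 = -h.intDegree := by
  rw [ordC_comp_of_pole transcendental_X_inv hh X_inv_denom_eval_zero, ordC_X_inv, mul_neg_one]

theorem ordDiff_infty_eq_ordC_pullback {h : RatFunc ℂ} (hh : h ≠ 0) (k : ℕ) :
    ordDiff k h ∞ = ordC (pullback k RatFunc.X⁻¹ h) 0 := by
  have hX := ne_zero_of_transcendental transcendental_X_inv
  obtain ⟨hD, hordD⟩ := ordC_deriv hX (x := 0) (by rw [ordC_X_inv]; norm_num)
  rw [pullback, ordC_mul (comp_ne_zero transcendental_X_inv hh) (pow_ne_zero _ hD),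
    ordC_pow hD, hordD, ordC_X_inv, ordC_comp_X_inv hh, ordDiff_infty]
  ring

theorem aeval_X_inv (p : ℂ[X]) :
    aeval (RatFunc.X⁻¹ : RatFunc ℂ) p = ι p.reverse * RatFunc.X⁻¹ ^ p.natDegree := by
  let := invertibleOfNonzero (ne_zero_of_transcendental transcendental_X_inv)
  have key := eval₂_reverse_mul_pow (algebraMap ℂ (RatFunc ℂ)) (RatFunc.X⁻¹ : RatFunc ℂ) p
  rw [invOf_eq_inv, inv_inv, ← aeval_def, RatFunc.aeval_X_left_eq_algebraMap, ← aeval_def]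
    at key
  exact key.symm

theorem evalP1_algebraMap_div {p q : ℂ[X]} {x : ℂ} (hq : q.eval x ≠ 0) :
    evalP1 (ι p / ι q) x = ((p.eval x / q.eval x : ℂ) : P1) := by
  set g := ι p / ι q
  have hq0 : q ≠ 0 := fun h => hq (by simp [h])
  obtain ⟨c, hc⟩ : g.denom ∣ q := RatFunc.denom_div_dvd p q
  have hg : g.denom.eval x ≠ 0 := fun h => hq (by rw [hc, eval_mul, h, zero_mul])
  have hkey := congrArg (eval x) ((RatFunc.num_mul_eq_mul_denom_iff hq0).2 rfl :
    g.num * q = p * g.denom)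
  rw [eval_mul, eval_mul] at hkey
  rw [evalP1_coe, if_neg hg]
  exact congrArg _ ((div_eq_div_iff hg hq).2 hkey)

theorem evalP1_infty_eq_evalP1_comp_X_inv {f : RatFunc ℂ} (hf : Transcendental ℂ f) :
    evalP1 f ∞ = evalP1 (comp f RatFunc.X⁻¹) (0 : ℂ) := by
  have hord := ordC_comp_X_inv (ne_zero_of_transcendental hf)
  rw [evalP1_infty_def]
  rcases lt_trichotomy f.intDegree 0 with hneg | hzero | hpos
  · have hpos' : 0 < ordC (comp f RatFunc.X⁻¹) 0 := by omega
    have hd : (comp f RatFunc.X⁻¹).denom.eval 0 ≠ 0 := fun h =>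
      (((ordC_neg_iff _ 0).2 h).trans hpos').false
    rw [if_neg hneg.not_gt, if_pos hneg, evalP1_coe, if_neg hd,
      num_eval_eq_zero_of_ordC_pos hpos', zero_div]
  · have hdeg : f.num.natDegree = f.denom.natDegree := by
      rw [RatFunc.intDegree] at hzero
      omega
    have hrev : comp f RatFunc.X⁻¹ = ι f.num.reverse / ι f.denom.reverse := by
      rw [comp, aeval_X_inv, aeval_X_inv, hdeg, mul_div_mul_right _ _
        (pow_ne_zero _ (ne_zero_of_transcendental transcendental_X_inv))]
    have hlc : f.denom.reverse.eval 0 ≠ 0 := by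
      rw [← coeff_zero_eq_eval_zero, coeff_zero_reverse]
      exact leadingCoeff_ne_zero.2 f.denom_ne_zero
    rw [if_neg hzero.not_gt, if_neg hzero.not_lt, hrev, evalP1_algebraMap_div hlc,
      ← coeff_zero_eq_eval_zero, ← coeff_zero_eq_eval_zero, coeff_zero_reverse,
      coeff_zero_reverse]
  · have hd : (comp f RatFunc.X⁻¹).denom.eval 0 = 0 := (ordC_neg_iff _ 0).1 (by omega)
    rw [if_pos hpos, evalP1_coe, if_pos hd]

end Infinity

section Sphere

variable {f g : RatFunc ℂ}

theorem ordDiff_pullback (hf : Transcendental ℂ f) (hg : g ≠ 0) (k : ℕ) (x : P1) :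
    ordDiff k (pullback k f g) x =
      locDeg f x * ordDiff k g (evalP1 f x) + k * ((locDeg f x : ℤ) - 1) := by
  induction x using OnePoint.rec with
  | infty =>
    rw [ordDiff_infty_eq_ordC_pullback (pullback_ne_zero hf hg k),
      pullback_pullback transcendental_X_inv,
      ordC_pullback (transcendental_comp hf transcendental_X_inv) hg,
      ← evalP1_infty_eq_evalP1_comp_X_inv hf]
    rfl
  | coe x => exact ordC_pullback hf hg k x

theorem ordDiff_C_mul {c : ℂ} (hc : c ≠ 0) (hg : g ≠ 0) (k : ℕ) (x : P1) :
    ordDiff k (RatFunc.C c * g) x = ordDiff k g x := by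
  have hC : RatFunc.C c ≠ 0 := by simpa using hc
  induction x using OnePoint.rec with
  | infty => rw [ordDiff_infty, ordDiff_infty, RatFunc.intDegree_mul hC hg, RatFunc.intDegree_C,
      zero_add]
  | coe x => rw [ordDiff_coe, ordDiff_coe, ordC_mul hC hg, ordC_C, zero_add]

theorem one_le_locDeg (hf : Transcendental ℂ f) (x : P1) : 1 ≤ locDeg f x := by
  induction x using OnePoint.rec with
  | infty => exact one_le_locDegC (transcendental_comp hf transcendental_X_inv) 0
  | coe x => exact one_le_locDegC hf x

theorem finite_setOf_ordDiff_ne_zero (hg : g ≠ 0) (k : ℕ) : {x : P1 | ordDiff k g x ≠ 0}.Finite :=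
  Set.finite_option.2 (finite_setOf_ordC_ne_zero hg)

theorem ram_finite (hf : Transcendental ℂ f) : (Ram f).Finite := by
  refine Set.finite_option.2 ((finite_setOf_ordC_ne_zero (deriv_ne_zero hf)).subset ?_)
  intro x (hx : 2 ≤ locDegC f x)
  show ordC (deriv f) x ≠ 0
  by_cases hpole : f.denom.eval x = 0
  · rw [ordC_deriv_of_pole hf hpole]
    omega
  · rw [ordC_deriv_of_not_pole hf hpole]
    omega

theorem natDegree_num_ne_zero_or_natDegree_denom_ne_zero (hf : Transcendental ℂ f) :
    f.num.natDegree ≠ 0 ∨ f.denom.natDegree ≠ 0 := by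
  by_contra! h
  apply ne_C_of_transcendental hf (f.num.coeff 0 / f.denom.coeff 0)
  conv_lhs => rw [← RatFunc.num_div_denom f, eq_C_of_natDegree_eq_zero h.1,
    eq_C_of_natDegree_eq_zero h.2, RatFunc.algebraMap_C, RatFunc.algebraMap_C, ← map_div₀]

theorem exists_evalP1_eq_infty (hf : Transcendental ℂ f) : ∃ x, evalP1 f x = ∞ := by
  by_cases hroot : ∃ z, f.denom.eval z = 0
  · obtain ⟨z, hz⟩ := hroot
    exact ⟨z, by rw [evalP1_coe, if_pos hz]⟩
  · have hd : f.denom.natDegree = 0 := by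
      by_contra hd
      exact hroot (Complex.exists_root (natDegree_pos_iff_degree_pos.1 (Nat.pos_of_ne_zero hd)))
    have hn := (natDegree_num_ne_zero_or_natDegree_denom_ne_zero hf).resolve_right (not_not.2 hd)
    refine ⟨∞, by rw [evalP1_infty_def, if_pos]; rw [RatFunc.intDegree]; omega⟩

theorem evalP1_infty_of_num_eq {w c : ℂ} (hnum : f.num = C w * f.denom + C c)
    (hd : f.denom.natDegree ≠ 0) : evalP1 f ∞ = w := by
  rcases eq_or_ne w 0 with rfl | hw
  · have hneg : f.intDegree < 0 := by
      rw [RatFunc.intDegree, hnum, map_zero, zero_mul, zero_add, natDegree_C]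
      omega
    rw [evalP1_infty_def, if_neg hneg.not_gt, if_pos hneg]
  · have hCw : (C w * f.denom).natDegree = f.denom.natDegree := natDegree_C_mul hw
    have hlt : (C c).degree < (C w * f.denom).degree :=
      degree_C_le.trans_lt (natDegree_pos_iff_degree_pos.1 (by omega))
    have hzero : f.intDegree = 0 := by
      rw [RatFunc.intDegree, hnum, natDegree_add_C, hCw, sub_self]
    rw [evalP1_infty_def, if_neg hzero.not_gt, if_neg hzero.not_lt, hnum,
      leadingCoeff_add_of_degree_lt' hlt, leadingCoeff_mul, leadingCoeff_C,
      mul_div_cancel_right₀ _ (leadingCoeff_ne_zero.2 f.denom_ne_zero)]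

theorem exists_evalP1_eq_coe (hf : Transcendental ℂ f) (w : ℂ) : ∃ x, evalP1 f x = w := by
  by_cases hdeg : 0 < (f.num - C w * f.denom).degree
  · obtain ⟨z, hz⟩ := Complex.exists_root hdeg
    have hz' : f.num.eval z = w * f.denom.eval z := by simpa [sub_eq_zero] using hz
    have hd : f.denom.eval z ≠ 0 := fun hd =>
      denom_eval_ne_zero_of_num_eval_eq_zero f (by rw [hz', hd, mul_zero]) hd
    exact ⟨z, by rw [evalP1_coe, if_neg hd, hz', mul_div_cancel_right₀ _ hd]⟩
  · obtain ⟨c, hc⟩ : ∃ c, f.num - C w * f.denom = C c :=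
      ⟨_, eq_C_of_degree_le_zero (not_lt.1 hdeg)⟩
    have hnum : f.num = C w * f.denom + C c := by rw [← hc]; ring
    have hd : f.denom.natDegree ≠ 0 := by
      intro hd0
      refine (natDegree_num_ne_zero_or_natDegree_denom_ne_zero hf).elim (fun hn => hn ?_) (· hd0)
      rw [hnum, natDegree_add_C]
      exact Nat.eq_zero_of_le_zero (hd0 ▸ natDegree_C_mul_le w f.denom)
    exact ⟨∞, evalP1_infty_of_num_eq hnum hd⟩

theorem evalP1_surjective (hf : Transcendental ℂ f) : Function.Surjective (evalP1 f) := by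
  intro y
  induction y using OnePoint.rec with
  | infty => exact exists_evalP1_eq_infty hf
  | coe w => exact exists_evalP1_eq_coe hf w

end Sphere

end ParallelTensor

/-- If `f*q = λ·q` then `f` is postcritically finite: `⋃_{n ≥ 1} fⁿ(Ram_f)` is finite. -/
theorem stmt_6 (f g : RatFunc ℂ) (d k : ℕ) (lam : ℂ)
    (hdeg : ParallelTensor.degRat f = d) (hd : 1 < d) (hk : 1 ≤ k)
    (hg : g ≠ 0) (hlam : lam ≠ 0)
    (heq : ParallelTensor.pullback k f g = RatFunc.C lam * g) :
    (ParallelTensor.PostCrit f).Finite := by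
  open ParallelTensor in
  have hf : Transcendental ℂ f := transcendental_of_one_le_degRat (by omega)
  have hrel : ∀ x, ordDiff k g x + k = locDeg f x * (ordDiff k g (evalP1 f x) + k) := by
    intro x
    have := ordDiff_pullback hf hg k x
    rw [heq, ordDiff_C_mul hlam hg] at this
    linear_combination this
  have hsupp : {x | ordDiff k g x + k ≠ k}.Finite :=
    (finite_setOf_ordDiff_ne_zero hg k).subset fun x hx => by simpa using hx
  exact finite_iUnion_iterate_image (ram_finite hf) fun c hc =>
    finite_range_iterate_apply_of_two_le (evalP1_surjective hf) hrel (one_le_locDeg hf) hsupp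
      (by omega) hc

end
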